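/- Let N be a monotone positively homogeneous function on nonnegative m×n matrices, and let A be an entrywise nonnegative m×n matrix with N(A) > 0. Then N*(A) ≤ τ₊(A)·N(A); that is, the self-scaled bound τ₊(A) dominates the norm-based bound: τ₊(A) ≥ N*(A)/N(A). -/

import Mathlib

/-!
If `L` is feasible for `N*(A)`, then `L / N(A)` is feasible for `τ₊(A)`: an atom `R ∈ 𝒜₊(A)`
satisfies `R ≤ A`, so `N(R) ≤ N(A)` by monotonicity and `R / N(A)` is admissible for `N*`.
The supremum defining `τ₊(A)` is finite because `A` is the sum of its single-entry matrices,
each of which is an atom.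
-/

open Matrix

/-- The set of atoms `𝒜₊(A)`: rank-at-most-one matrices `R` with `0 ≤ R ≤ A` entrywise. -/
noncomputable def Aplus {m n : Type*} [Fintype m] [Fintype n]
    (A : Matrix m n ℝ) : Set (Matrix m n ℝ) :=
  {R | R.rank ≤ 1 ∧ ∀ i j, 0 ≤ R i j ∧ R i j ≤ A i j}

/-- `τ₊(A)`: supremum of `L(A)` over linear functionals `L` with `L ≤ 1` on `𝒜₊(A)`. -/
noncomputable def tauPlus {m n : Type*} [Fintype m] [Fintype n]
    (A : Matrix m n ℝ) : ℝ :=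
  sSup {x | ∃ L : Matrix m n ℝ →ₗ[ℝ] ℝ, (∀ R ∈ Aplus A, L R ≤ 1) ∧ L A = x}

namespace Matrix

theorem single_eq_vecMulVec {R m n : Type*} [CommSemiring R] [DecidableEq m] [DecidableEq n]
    (i : m) (j : n) (c : R) : single i j c = vecMulVec (Pi.single i c) (Pi.single j 1) := by
  ext i' j'
  simp only [single_apply, vecMulVec_apply, Pi.single_apply, ite_and, eq_comm (a := i'),
    eq_comm (a := j'), mul_ite, mul_one, mul_zero]
  split_ifs <;> rfl

theorem rank_single_le_one {R m n : Type*} [CommSemiring R] [StrongRankCondition R] [Fintype n]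
    [DecidableEq m] [DecidableEq n] (i : m) (j : n) (c : R) : (single i j c).rank ≤ 1 := by
  rw [single_eq_vecMulVec]
  exact rank_vecMulVec_le _ _

end Matrix

section TauPlus

variable {m n : Type*} [Fintype m] [Fintype n] {A : Matrix m n ℝ}

theorem single_mem_Aplus [DecidableEq m] [DecidableEq n] (hA : ∀ i j, 0 ≤ A i j) (i : m) (j : n) :
    single i j (A i j) ∈ Aplus A := by
  refine ⟨rank_single_le_one i j _, fun i' j' => ?_⟩
  rw [single_apply]
  split_ifs with h
  · obtain ⟨rfl, rfl⟩ := h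
    exact ⟨hA i j, le_rfl⟩
  · exact ⟨le_rfl, hA i' j'⟩

theorem apply_le_card_mul_card_of_le_one_on_Aplus (hA : ∀ i j, 0 ≤ A i j)
    {L : Matrix m n ℝ →ₗ[ℝ] ℝ} (hL : ∀ R ∈ Aplus A, L R ≤ 1) :
    L A ≤ Fintype.card m * Fintype.card n := by
  classical
  calc L A = ∑ i, ∑ j, L (single i j (A i j)) := by
        conv_lhs => rw [matrix_eq_sum_single A]
        simp only [map_sum]
    _ ≤ ∑ _i : m, ∑ _j : n, (1 : ℝ) :=
        Finset.sum_le_sum fun i _ => Finset.sum_le_sum fun j _ => hL _ (single_mem_Aplus hA i j)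
    _ = Fintype.card m * Fintype.card n := by simp

theorem le_tauPlus (hA : ∀ i j, 0 ≤ A i j) {L : Matrix m n ℝ →ₗ[ℝ] ℝ}
    (hL : ∀ R ∈ Aplus A, L R ≤ 1) : L A ≤ tauPlus A :=
  le_csSup ⟨_, fun _ ⟨_, hL', hx⟩ => hx ▸ apply_le_card_mul_card_of_le_one_on_Aplus hA hL'⟩
    ⟨L, hL, rfl⟩

theorem tauPlus_nonneg (hA : ∀ i j, 0 ≤ A i j) : 0 ≤ tauPlus A := by
  simpa using le_tauPlus hA (L := 0) fun _ _ => zero_le_one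

theorem apply_le_tauPlus_mul (N : Matrix m n ℝ → ℝ)
    (hhom : ∀ A : Matrix m n ℝ, (∀ i j, 0 ≤ A i j) → ∀ c : ℝ, 0 ≤ c → N (c • A) = c * N A)
    (hmono : ∀ A B : Matrix m n ℝ, (∀ i j, 0 ≤ A i j) → (∀ i j, 0 ≤ B i j) →
      (∀ i j, A i j ≤ B i j) → N A ≤ N B)
    (hA : ∀ i j, 0 ≤ A i j) (hNA : 0 < N A) {L : Matrix m n ℝ →ₗ[ℝ] ℝ}
    (hL : ∀ X : Matrix m n ℝ, (∀ i j, 0 ≤ X i j) → X.rank ≤ 1 → N X ≤ 1 → L X ≤ 1) :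
    L A ≤ tauPlus A * N A := by
  have hc : 0 ≤ (N A)⁻¹ := inv_nonneg.mpr hNA.le
  have hfeas : ∀ R ∈ Aplus A, ((N A)⁻¹ • L) R ≤ 1 := by
    rintro R ⟨hrank, hRA⟩
    have hR : ∀ i j, 0 ≤ R i j := fun i j => (hRA i j).1
    have hNR : N ((N A)⁻¹ • R) ≤ 1 := by
      rw [hhom R hR _ hc, inv_mul_le_one₀ hNA]
      exact hmono R A hR hA fun i j => (hRA i j).2
    have hrank' : ((N A)⁻¹ • R).rank ≤ 1 := by
      rwa [rank_smul_of_mem_nonZeroDivisors R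
        (mem_nonZeroDivisors_of_ne_zero (inv_ne_zero hNA.ne'))]
    simpa only [map_smul, smul_eq_mul, LinearMap.smul_apply] using
      hL ((N A)⁻¹ • R) (fun i j => mul_nonneg hc (hR i j)) hrank' hNR
  have := le_tauPlus hA hfeas
  rwa [LinearMap.smul_apply, smul_eq_mul, inv_mul_le_iff₀ hNA, mul_comm] at this

end TauPlus

theorem stmt12_general {m n : ℕ} (N : Matrix (Fin m) (Fin n) ℝ → ℝ)
    (hhom : ∀ A : Matrix (Fin m) (Fin n) ℝ, (∀ i j, 0 ≤ A i j) →
      ∀ c : ℝ, 0 ≤ c → N (c • A) = c * N A)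
    (hmono : ∀ A B : Matrix (Fin m) (Fin n) ℝ, (∀ i j, 0 ≤ A i j) →
      (∀ i j, 0 ≤ B i j) → (∀ i j, A i j ≤ B i j) → N A ≤ N B)
    (A : Matrix (Fin m) (Fin n) ℝ) (hA : ∀ i j, 0 ≤ A i j) (hNA : 0 < N A) :
    (sSup {x : ℝ | ∃ L : Matrix (Fin m) (Fin n) ℝ →ₗ[ℝ] ℝ,
        (∀ X : Matrix (Fin m) (Fin n) ℝ,
          (∀ i j, 0 ≤ X i j) → X.rank ≤ 1 → N X ≤ 1 → L X ≤ 1) ∧ L A = x}) ≤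
      tauPlus A * N A ∧
    (sSup {x : ℝ | ∃ L : Matrix (Fin m) (Fin n) ℝ →ₗ[ℝ] ℝ,
        (∀ X : Matrix (Fin m) (Fin n) ℝ,
          (∀ i j, 0 ≤ X i j) → X.rank ≤ 1 → N X ≤ 1 → L X ≤ 1) ∧ L A = x}) / N A ≤
      tauPlus A := by
  refine (fun key => ⟨key, (div_le_iff₀ hNA).mpr key⟩)
    (Real.sSup_le ?_ (mul_nonneg (tauPlus_nonneg hA) hNA.le))
  rintro _ ⟨L, hL, rfl⟩
  exact apply_le_tauPlus_mul N hhom hmono hA hNA hL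

/-- the self-scaled bound `τ₊` dominates any norm-based bound: for a
monotone positively homogeneous `N` with `N(A) > 0`, one has `N*(A) ≤ τ₊(A)·N(A)`,
i.e. `τ₊(A) ≥ N*(A)/N(A)`. -/
theorem stmt12 {m n : ℕ} (N : Matrix (Fin m) (Fin n) ℝ → ℝ)
    (hN0 : ∀ A : Matrix (Fin m) (Fin n) ℝ, (∀ i j, 0 ≤ A i j) → 0 ≤ N A)
    (hhom : ∀ A : Matrix (Fin m) (Fin n) ℝ, (∀ i j, 0 ≤ A i j) →
      ∀ c : ℝ, 0 ≤ c → N (c • A) = c * N A)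
    (hmono : ∀ A B : Matrix (Fin m) (Fin n) ℝ, (∀ i j, 0 ≤ A i j) →
      (∀ i j, 0 ≤ B i j) → (∀ i j, A i j ≤ B i j) → N A ≤ N B)
    (A : Matrix (Fin m) (Fin n) ℝ) (hA : ∀ i j, 0 ≤ A i j) (hNA : 0 < N A) :
    (sSup {x : ℝ | ∃ L : Matrix (Fin m) (Fin n) ℝ →ₗ[ℝ] ℝ,
        (∀ X : Matrix (Fin m) (Fin n) ℝ,
          (∀ i j, 0 ≤ X i j) → X.rank ≤ 1 → N X ≤ 1 → L X ≤ 1) ∧ L A = x}) ≤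
      tauPlus A * N A ∧
    (sSup {x : ℝ | ∃ L : Matrix (Fin m) (Fin n) ℝ →ₗ[ℝ] ℝ,
        (∀ X : Matrix (Fin m) (Fin n) ℝ,
          (∀ i j, 0 ≤ X i j) → X.rank ≤ 1 → N X ≤ 1 → L X ≤ 1) ∧ L A = x}) / N A ≤
      tauPlus A :=
  stmt12_general N hhom hmono A hA hNA
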